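/- arXiv:2012.03103 — 2 statements merged into one kernel-verified Lean document; each statement's English description precedes it below -/
import Mathlib

section
/- If all odds satisfy wₙ ∈ [w_lb, w_ub] with 0 < w_lb < w_ub, then for any adjacent pair (x,x̃) with w_a ≤ w_b, the contraction rate c(x,x̃) = (1/((N-I)I))[|1 - wₐ/w_b| + Σ_{i₁∈S₁∩S̃₁} min(1, wₐ/w_{i₁}) + Σ_{i₀∈S₀∩S̃₀} min(1, w_{i₀}/w_b)] is at least (N-2)/((N-I)I) · (w_lb/w_ub). -/
open Finset

/-! Every ratio of two odds in `[w_lb, w_ub]` is at least `w_lb / w_ub ≤ 1`, so each of the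
`(I - 1) + (N - I - 1) = N - 2` summands `min 1 (·/·)` is at least `w_lb / w_ub`, while the
absolute-value term is nonnegative. -/

theorem div_le_min_one_div {K : Type*} [Field K] [LinearOrder K] [IsStrictOrderedRing K]
    {lb ub x y : K} (hlb : 0 < lb) (hx : lb ≤ x) (hy : lb ≤ y) (hyub : y ≤ ub) :
    lb / ub ≤ min 1 (x / y) := by
  have hy0 : 0 < y := hlb.trans_le hy
  have hub : 0 < ub := hy0.trans_le hyub
  refine le_min ((div_le_one hub).2 (hy.trans hyub)) ?_
  calc lb / ub ≤ lb / y := div_le_div_of_nonneg_left hlb.le hy0 hyub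
    _ ≤ x / y := div_le_div_of_nonneg_right hx hy0.le

theorem natCast_pred_add_natCast_sub_pred {N I : ℕ} (hI1 : 1 ≤ I) (hIN : I ≤ N - 1) :
    ((I - 1 : ℕ) : ℝ) + ((N - I - 1 : ℕ) : ℝ) = N - 2 := by
  rw [← Nat.cast_add, show I - 1 + (N - I - 1) = N - 2 by omega, Nat.cast_sub (by omega)]
  norm_num

theorem contraction_rate_bounded_odds_general
    (N I : ℕ) (hI1 : 1 ≤ I) (hIN : I ≤ N - 1)
    (wlb wub : ℝ) (hlb : 0 < wlb)
    (w : Fin N → ℝ) (hw : ∀ n, wlb ≤ w n ∧ w n ≤ wub)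
    (a b : Fin N) (S1 S0 : Finset (Fin N))
    (hS1 : S1.card = I - 1) (hS0 : S0.card = N - I - 1) :
    ((N : ℝ) - 2) / (((N : ℝ) - I) * I) * (wlb / wub)
      ≤ (1 / (((N : ℝ) - I) * I)) *
          (|1 - w a / w b|
            + (∑ i₁ ∈ S1, min 1 (w a / w i₁))
            + (∑ i₀ ∈ S0, min 1 (w i₀ / w b))) := by
  have hratio (x y : Fin N) : wlb / wub ≤ min 1 (w x / w y) :=
    div_le_min_one_div hlb (hw x).1 (hw y).1 (hw y).2
  have hsum1 := card_nsmul_le_sum S1 _ _ fun i _ => hratio a i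
  have hsum0 := card_nsmul_le_sum S0 _ _ fun i _ => hratio i b
  rw [nsmul_eq_mul, hS1] at hsum1
  rw [nsmul_eq_mul, hS0] at hsum0
  have hden : 0 ≤ ((N : ℝ) - I) * I := by
    have : (I : ℝ) ≤ N := by exact_mod_cast (hIN.trans (Nat.sub_le N 1))
    exact mul_nonneg (sub_nonneg.2 this) (Nat.cast_nonneg I)
  calc ((N : ℝ) - 2) / (((N : ℝ) - I) * I) * (wlb / wub)
      = 1 / (((N : ℝ) - I) * I) * (((N : ℝ) - 2) * (wlb / wub)) := by ring
    _ ≤ _ := by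
      gcongr
      rw [← natCast_pred_add_natCast_sub_pred hI1 hIN, add_mul]
      linarith [abs_nonneg (1 - w a / w b)]

/-- If all odds lie in `[w_lb, w_ub]` with `0 < w_lb < w_ub`, the contraction
rate from any adjacent pair (with `wₐ ≤ w_b`) is at least
`(N-2)/((N-I)I) · (w_lb/w_ub)`. -/
theorem contraction_rate_bounded_odds
    (N I : ℕ) (hN : 2 ≤ N) (hI1 : 1 ≤ I) (hIN : I ≤ N - 1)
    (wlb wub : ℝ) (hlb : 0 < wlb) (hlbub : wlb < wub)
    (w : Fin N → ℝ) (hw : ∀ n, wlb ≤ w n ∧ w n ≤ wub)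
    (a b : Fin N) (hab : w a ≤ w b) (S1 S0 : Finset (Fin N))
    (hS1 : S1.card = I - 1) (hS0 : S0.card = N - I - 1) :
    ((N : ℝ) - 2) / (((N : ℝ) - I) * I) * (wlb / wub)
      ≤ (1 / (((N : ℝ) - I) * I)) *
          (|1 - w a / w b|
            + (∑ i₁ ∈ S1, min 1 (w a / w i₁))
            + (∑ i₀ ∈ S0, min 1 (w i₀ / w b))) :=
  contraction_rate_bounded_odds_general N I hI1 hIN wlb wub hlb w hw a b S1 S0 hS1 hS0
end

section
/- Absorption bound for the 3-state chain: let (Zₜ) be a Markov chain on {1,2,3} with transition matrix Q having rows (1-u, u, 0), (f, 1-f-g, g), (0,0,1), where u = a/N, f = b/N, g = c/N for constants a, b, c > 0. Then there exists r ∈ (0,1) depending only on a, b, c (not on N) such that for all sufficiently large N, P(Z_N = 3 | Z₀ = 1) ≥ 1 - r. -/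
/-- Absorption bound for the 3-state chain: for the transition matrix `Q` with
rows `(1-a/N, a/N, 0)`, `(b/N, 1-b/N-c/N, c/N)`, `(0,0,1)` with constants
`a, b, c > 0`, there exists `r ∈ (0,1)` depending only on `a, b, c` such that
for all sufficiently large `N`, `P(Z_N = 3 | Z₀ = 1) = (Q^N)₁₃ ≥ 1 - r`. -/
theorem three_state_absorption_bound (a b c : ℝ)
    (ha : 0 < a) (hb : 0 < b) (hc : 0 < c) :
    ∃ r : ℝ, 0 < r ∧ r < 1 ∧ ∃ N₀ : ℕ, ∀ N : ℕ, N₀ ≤ N →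
      ∀ Q : Matrix (Fin 3) (Fin 3) ℝ,
        Q = Matrix.of ![![1 - a / N, a / N, 0],
                        ![b / N, 1 - b / N - c / N, c / N],
                        ![0, 0, 1]] →
        1 - r ≤ (Q ^ N) 0 2 := by
  -- the eventual lower bound on the absorption probability
  have hbc : 0 < b + c := by linarith
  set A₀ : ℝ := 1 - Real.exp (-(a/3)) with hA₀
  set B₀ : ℝ := (c / (b + c)) * (1 - Real.exp (-((b+c)/3))) with hB₀
  have hexpA : Real.exp (-(a/3)) < 1 := Real.exp_lt_one_iff.mpr (by linarith)
  have hexpB : Real.exp (-((b+c)/3)) < 1 := Real.exp_lt_one_iff.mpr (by linarith)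
  have hexpApos : 0 < Real.exp (-(a/3)) := Real.exp_pos _
  have hexpBpos : 0 < Real.exp (-((b+c)/3)) := Real.exp_pos _
  have hA₀pos : 0 < A₀ := by rw [hA₀]; linarith
  have hA₀lt : A₀ < 1 := by rw [hA₀]; linarith
  have hB₀pos : 0 < B₀ := by
    apply mul_pos (by positivity); linarith
  have hB₀lt : B₀ < 1 := by
    have h1 : c / (b + c) < 1 := (div_lt_one hbc).mpr (by linarith)
    have h2 : 0 < 1 - Real.exp (-((b+c)/3)) := by linarith
    nlinarith
  refine ⟨1 - A₀ * B₀, ?_, ?_, ⌈a⌉₊ + ⌈b + c⌉₊ + 2, ?_⟩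
  · nlinarith
  · nlinarith
  intro N hN Q hQ
  have hN2 : 2 ≤ N := by omega
  have hNpos : (0:ℝ) < N := by positivity
  have haN : a ≤ N := by
    have h1 : a ≤ (⌈a⌉₊ : ℝ) := Nat.le_ceil a
    have h2 : (⌈a⌉₊ : ℝ) ≤ N := by exact_mod_cast Nat.le_of_lt_succ (by omega)
    linarith
  have hbcN : b + c ≤ N := by
    have h1 : b + c ≤ (⌈b + c⌉₊ : ℝ) := Nat.le_ceil _
    have h2 : (⌈b + c⌉₊ : ℝ) ≤ N := by exact_mod_cast Nat.le_of_lt_succ (by omega)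
    linarith
  obtain ⟨u, hu⟩ : ∃ u : ℝ, u = a / N := ⟨_, rfl⟩
  obtain ⟨f, hf⟩ : ∃ f : ℝ, f = b / N := ⟨_, rfl⟩
  obtain ⟨g, hg⟩ : ∃ g : ℝ, g = c / N := ⟨_, rfl⟩
  rw [← hu, ← hf, ← hg] at hQ
  have hupos : 0 < u := by rw [hu]; positivity
  have hfpos : 0 < f := by rw [hf]; positivity
  have hgpos : 0 < g := by rw [hg]; positivity
  have hule : u ≤ 1 := by rw [hu, div_le_one hNpos]; linarith
  have hfgsum : f + g = (b + c) / N := by rw [hf, hg]; ring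
  have hfgle : f + g ≤ 1 := by rw [hfgsum, div_le_one hNpos]; linarith
  have hfgpos : 0 < f + g := by linarith
  -- entries of Q
  have e00 : Q 0 0 = 1 - u := by rw [hQ]; rfl
  have e01 : Q 0 1 = u := by rw [hQ]; rfl
  have e02 : Q 0 2 = 0 := by rw [hQ]; rfl
  have e10 : Q 1 0 = f := by rw [hQ]; rfl
  have e11 : Q 1 1 = 1 - f - g := by rw [hQ]; rfl
  have e12 : Q 1 2 = g := by rw [hQ]; rfl
  have e20 : Q 2 0 = 0 := by rw [hQ]; rfl
  have e21 : Q 2 1 = 0 := by rw [hQ]; rfl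
  have e22 : Q 2 2 = 1 := by rw [hQ]; rfl
  -- entry nonnegativity of Q
  have hQnn : ∀ i j, 0 ≤ Q i j := by
    intro i j
    fin_cases i <;> fin_cases j <;> simp [hQ] <;> linarith
  have hQnn' : 0 ≤ Q 0 2 ∧ 0 ≤ Q 1 2 ∧ 0 ≤ Q 2 2 := ⟨hQnn 0 2, hQnn 1 2, hQnn 2 2⟩
  have hpownn : ∀ t : ℕ, ∀ i j, 0 ≤ (Q ^ t) i j := by
    intro t
    induction t with
    | zero =>
        intro i j
        rw [pow_zero]
        by_cases h : i = j <;> simp [Matrix.one_apply, h]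
    | succ t ih =>
        intro i j
        rw [pow_succ, Matrix.mul_apply]
        exact Finset.sum_nonneg fun k _ => mul_nonneg (ih i k) (hQnn k j)
  -- row 2: (Q^t) 2 2 = 1
  have h22 : ∀ t : ℕ, (Q ^ t) 2 2 = 1 := by
    intro t
    induction t with
    | zero => simp
    | succ t ih =>
        rw [pow_succ', Matrix.mul_apply, Fin.sum_univ_three, e20, e21, e22, ih]
        ring
  -- recurrences
  have hxrec : ∀ t : ℕ, (Q ^ (t+1)) 0 2 = (1 - u) * (Q ^ t) 0 2 + u * (Q ^ t) 1 2 := by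
    intro t
    rw [pow_succ', Matrix.mul_apply, Fin.sum_univ_three, e00, e01, e02]
    ring
  have hyrec : ∀ t : ℕ, (Q ^ (t+1)) 1 2
      = f * (Q ^ t) 0 2 + (1 - (f + g)) * (Q ^ t) 1 2 + g := by
    intro t
    rw [pow_succ', Matrix.mul_apply, Fin.sum_univ_three, e10, e11, e12, h22 t]
    ring
  -- monotonicity of absorption probability
  have hmono : ∀ s t : ℕ, s ≤ t → (Q ^ s) 0 2 ≤ (Q ^ t) 0 2 := by
    have hstep : ∀ t : ℕ, (Q ^ t) 0 2 ≤ (Q ^ (t+1)) 0 2 := by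
      intro t
      have h : (Q ^ (t+1)) 0 2 = (Q ^ t) 0 0 * Q 0 2 + (Q ^ t) 0 1 * Q 1 2
          + (Q ^ t) 0 2 * Q 2 2 := by
        rw [pow_succ, Matrix.mul_apply, Fin.sum_univ_three]
      rw [h, e02, e12, e22]
      have := mul_nonneg (hpownn t 0 1) (le_of_lt hgpos)
      linarith
    exact fun s t hst => monotone_nat_of_le_succ hstep hst
  obtain ⟨σ, hσ⟩ : ∃ s : ℝ, s = 1 - (f + g) := ⟨_, rfl⟩
  have hσnn : 0 ≤ σ := by rw [hσ]; linarith
  have hσle : σ ≤ 1 := by rw [hσ]; linarith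
  -- lower bound for y t
  have hyB : ∀ t : ℕ, (g / (f + g)) * (1 - σ ^ t) ≤ (Q ^ t) 1 2 := by
    intro t
    induction t with
    | zero => simp
    | succ t ih =>
        rw [hyrec t, ← hσ]
        have hx0 : 0 ≤ f * (Q ^ t) 0 2 := mul_nonneg (le_of_lt hfpos) (hpownn t 0 2)
        have h1 : σ * ((g / (f + g)) * (1 - σ ^ t)) ≤ σ * (Q ^ t) 1 2 :=
          mul_le_mul_of_nonneg_left ih hσnn
        have halg : σ * ((g / (f + g)) * (1 - σ ^ t)) + g
            = (g / (f + g)) * (1 - σ ^ (t+1)) := by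
          have hfg0 : f + g ≠ 0 := ne_of_gt hfgpos
          rw [pow_succ, hσ]
          field_simp
          ring
        linarith
  set M : ℕ := N / 2 with hM
  set Bm : ℝ := (g / (f + g)) * (1 - σ ^ M) with hBm
  have hσMle : σ ^ M ≤ 1 := pow_le_one₀ hσnn hσle
  have hBmnn : 0 ≤ Bm := by
    rw [hBm]
    apply mul_nonneg (by positivity)
    linarith
  -- lower bound for x (M + k)
  have hxB : ∀ k : ℕ, (1 - (1 - u) ^ k) * Bm ≤ (Q ^ (M + k)) 0 2 := by
    intro k
    induction k with
    | zero => simpa using hpownn M 0 2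
    | succ k ih =>
        have hyMk : Bm ≤ (Q ^ (M + k)) 1 2 := by
          refine le_trans ?_ (hyB (M + k))
          rw [hBm]
          apply mul_le_mul_of_nonneg_left _ (by positivity)
          have : σ ^ (M + k) ≤ σ ^ M := pow_le_pow_of_le_one hσnn hσle (by omega)
          linarith
        have h1 : (1 - u) * ((1 - (1 - u) ^ k) * Bm) ≤ (1 - u) * (Q ^ (M + k)) 0 2 :=
          mul_le_mul_of_nonneg_left ih (by linarith)
        have h2 : u * Bm ≤ u * (Q ^ (M + k)) 1 2 :=
          mul_le_mul_of_nonneg_left hyMk (le_of_lt hupos)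
        have hMk : M + (k + 1) = (M + k) + 1 := by omega
        rw [hMk, hxrec (M + k)]
        have heq : (1 - u) * ((1 - (1 - u) ^ k) * Bm) + u * Bm
            = (1 - (1 - u) ^ (k+1)) * Bm := by ring
        linarith
  -- numeric bounds
  have hMN : N ≤ 3 * M := by omega
  have hMNr : (N : ℝ) ≤ 3 * M := by exact_mod_cast hMN
  have hpow_exp : ∀ x : ℝ, 0 ≤ x → x ≤ 1 → (1 - x) ^ M ≤ Real.exp (-(x * M)) := by
    intro x hx hx1
    have h1 : 1 - x ≤ Real.exp (-x) := by
      have := Real.add_one_le_exp (-x); linarith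
    calc (1 - x) ^ M ≤ (Real.exp (-x)) ^ M := pow_le_pow_left₀ (by linarith) h1 M
      _ = Real.exp (-(x * M)) := by
          rw [← Real.exp_nat_mul]; congr 1; ring
  have huM : a / 3 ≤ u * M := by
    rw [hu, div_mul_eq_mul_div, le_div_iff₀ hNpos]
    linarith [mul_le_mul_of_nonneg_left hMNr (le_of_lt ha)]
  have hfgM : (b + c) / 3 ≤ (f + g) * M := by
    rw [hfgsum, div_mul_eq_mul_div, le_div_iff₀ hNpos]
    linarith [mul_le_mul_of_nonneg_left hMNr (le_of_lt hbc)]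
  have hubound : (1 - u) ^ M ≤ Real.exp (-(a/3)) := by
    refine le_trans (hpow_exp u (le_of_lt hupos) hule) ?_
    exact Real.exp_le_exp.mpr (by linarith)
  have hσbound : σ ^ M ≤ Real.exp (-((b+c)/3)) := by
    rw [hσ]
    refine le_trans (hpow_exp (f + g) (le_of_lt hfgpos) hfgle) ?_
    exact Real.exp_le_exp.mpr (by linarith)
  have hratio : g / (f + g) = c / (b + c) := by
    rw [hfgsum, hg, div_div_div_eq]
    rw [mul_comm ((N:ℝ)) (b+c), mul_div_mul_right _ _ (ne_of_gt hNpos)]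
  have hBmB : B₀ ≤ Bm := by
    rw [hBm, hratio, hB₀]
    apply mul_le_mul_of_nonneg_left _ (by positivity)
    linarith
  have hAM : A₀ ≤ 1 - (1 - u) ^ M := by rw [hA₀]; linarith
  have hfinal : A₀ * B₀ ≤ (Q ^ (M + M)) 0 2 := by
    refine le_trans ?_ (hxB M)
    exact mul_le_mul hAM hBmB (le_of_lt hB₀pos) (by linarith)
  have hMM : M + M ≤ N := by omega
  have hlast : A₀ * B₀ ≤ (Q ^ N) 0 2 := le_trans hfinal (hmono (M + M) N hMM)
  linarith
end
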